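/- Let x_1, x_2 ∈ ℝ^D, λ ∈ (0,1), and γ = log₂(λ/(1-λ)). Then the ζ-mixup synthetic sample with N = 2 and identity permutation, x̂ = w_1 x_1 + w_2 x_2 with w_i = i^(-γ)/(1^(-γ)+2^(-γ)), equals the mixup sample λ x_1 + (1-λ) x_2. -/

import Mathlib

/-! With γ = log₂(λ/(1-λ)) the second ζ-weight ratio is 2^(-γ) = (1-λ)/λ, while 1^(-γ) = 1;
normalising the pair (1, (1-λ)/λ) by its sum 1/λ gives exactly the mixup weights (λ, 1-λ). -/

open Real

lemma rpow_neg_logb_div {b x y : ℝ} (hb : 0 < b) (hb₁ : b ≠ 1) (hx : 0 < x) (hy : 0 < y) :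
    b ^ (-logb b (x / y)) = y / x := by
  rw [← logb_inv, inv_div, rpow_logb hb hb₁ (div_pos hy hx)]

lemma one_add_one_sub_div_self {l : ℝ} (hl : l ≠ 0) : 1 + (1 - l) / l = l⁻¹ := by
  field_simp
  ring

lemma one_div_one_add_one_sub_div_self {l : ℝ} (hl : l ≠ 0) : 1 / (1 + (1 - l) / l) = l := by
  rw [one_add_one_sub_div_self hl, one_div, inv_inv]

lemma one_sub_div_self_div_one_add {l : ℝ} (hl : l ≠ 0) :
    (1 - l) / l / (1 + (1 - l) / l) = 1 - l := by
  rw [one_add_one_sub_div_self hl, div_inv_eq_mul, div_mul_cancel₀ _ hl]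

/-- For λ ∈ (0,1) and γ = log₂(λ/(1-λ)), the N = 2 ζ-mixup sample equals
the mixup sample λ x₁ + (1-λ) x₂. -/
theorem zeta_mixup_two_sample_eq_mixup
    (D : ℕ) (x₁ x₂ : Fin D → ℝ) (l : ℝ) (hl : l ∈ Set.Ioo (0 : ℝ) 1) :
    (((1 : ℝ) ^ (-(Real.logb 2 (l / (1 - l)))) /
        ((1 : ℝ) ^ (-(Real.logb 2 (l / (1 - l)))) +
          (2 : ℝ) ^ (-(Real.logb 2 (l / (1 - l)))))) • x₁ +
      ((2 : ℝ) ^ (-(Real.logb 2 (l / (1 - l)))) /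
        ((1 : ℝ) ^ (-(Real.logb 2 (l / (1 - l)))) +
          (2 : ℝ) ^ (-(Real.logb 2 (l / (1 - l)))))) • x₂) =
    l • x₁ + (1 - l) • x₂ := by
  obtain ⟨hl₀, hl₁⟩ := hl
  rw [one_rpow, rpow_neg_logb_div two_pos (by norm_num) hl₀ (sub_pos.mpr hl₁),
    one_div_one_add_one_sub_div_self hl₀.ne', one_sub_div_self_div_one_add hl₀.ne']
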